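/- Define weights W(x) = 1 if x ∈ (1/2,1], W(x) = 1/2 if x ∈ (1/4,1/2], and W(x) = 3x if x ∈ (0,1/4]. Then any bin B containing items with sizes in (0,1] whose total size is at least 2/3 has total weight at least 1. -/

import Mathlib

/-!
A non-tiny item of size `x ≤ 1/2` weighs `1/2 ≥ 3x - 1`, a tiny one weighs exactly `3x`.
So if no item is large and `k` items are non-tiny, the weight is at least both `k/2` and
`3 · (2/3) - k`; as `k` is an integer, one of these is at least `1`. A large item alone
already weighs `1`.
-/

/-- The weight function: large items (size in (1/2,1]) have weight 1, medium and small items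
(size in (1/4,1/2]) have weight 1/2, tiny items (size in (0,1/4]) have weight 3x. -/
noncomputable def W (x : ℝ) : ℝ :=
  if 1/2 < x then 1 else if 1/4 < x then 1/2 else 3 * x

theorem Multiset.sum_map_boole {α R : Type*} [NonAssocSemiring R] (s : Multiset α)
    (p : α → Prop) [DecidablePred p] :
    (s.map fun x => if p x then (1 : R) else 0).sum = s.countP p := by
  induction s using Multiset.induction with
  | empty => simp
  | cons a s ih => by_cases h : p a <;> simp [h, ih, add_comm]

lemma W_of_half_lt {x : ℝ} (hx : 1/2 < x) : W x = 1 :=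
  if_pos hx

lemma W_nonneg {x : ℝ} (hx : 0 ≤ x) : 0 ≤ W x := by
  unfold W; split_ifs <;> linarith

lemma half_boole_le_W {x : ℝ} (hx : 0 ≤ x) : (if 1/4 < x then 1/2 else 0) ≤ W x := by
  unfold W; split_ifs <;> linarith

lemma three_mul_sub_boole_le_W {x : ℝ} (hx : x ≤ 1/2) :
    3 * x - (if 1/4 < x then 1 else 0) ≤ W x := by
  unfold W; split_ifs <;> linarith

lemma countP_div_two_le_sum_map_W {B : Multiset ℝ} (hB : ∀ x ∈ B, 0 ≤ x) :
    (B.countP (1/4 < ·) : ℝ) / 2 ≤ (B.map W).sum :=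
  calc (B.countP (1/4 < ·) : ℝ) / 2
      = (B.map fun x => if 1/4 < x then (1/2 : ℝ) else 0).sum := by
        rw [← Multiset.sum_map_boole, div_eq_mul_one_div, ← Multiset.sum_map_mul_right]
        simp only [ite_mul, one_mul, zero_mul]
    _ ≤ (B.map W).sum :=
        Multiset.sum_map_le_sum_map _ _ fun x hx => half_boole_le_W (hB x hx)

lemma three_mul_sum_sub_countP_le_sum_map_W {B : Multiset ℝ} (hB : ∀ x ∈ B, x ≤ 1/2) :
    3 * B.sum - B.countP (1/4 < ·) ≤ (B.map W).sum :=
  calc 3 * B.sum - B.countP (1/4 < ·)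
      = (B.map fun x => 3 * x - if 1/4 < x then (1 : ℝ) else 0).sum := by
        rw [← Multiset.sum_map_boole, Multiset.sum_map_sub, Multiset.sum_map_mul_left,
          Multiset.map_id']
    _ ≤ (B.map W).sum :=
        Multiset.sum_map_le_sum_map _ _ fun x hx => three_mul_sub_boole_le_W (hB x hx)

theorem stmt3_general (B : Multiset ℝ) (hB : ∀ x ∈ B, 0 < x ∧ x ≤ 1)
    (hvol : 2/3 ≤ B.sum) :
    1 ≤ (B.map W).sum := by
  have hW_nonneg : ∀ w ∈ B.map W, 0 ≤ w :=
    Multiset.forall_mem_map_iff.mpr fun x hx => W_nonneg (hB x hx).1.le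
  by_cases hlarge : ∃ x ∈ B, 1/2 < x
  · obtain ⟨x, hx, hx_large⟩ := hlarge
    calc 1 = W x := (W_of_half_lt hx_large).symm
      _ ≤ (B.map W).sum := Multiset.single_le_sum hW_nonneg _ (Multiset.mem_map_of_mem W hx)
  push Not at hlarge
  have hhalf := countP_div_two_le_sum_map_W fun x hx => (hB x hx).1.le
  have hthree := three_mul_sum_sub_countP_le_sum_map_W hlarge
  rcases le_or_gt (B.countP (1/4 < ·)) 1 with hk | hk
  · have : (B.countP (1/4 < ·) : ℝ) ≤ 1 := by exact_mod_cast hk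
    linarith
  · have : (2 : ℝ) ≤ B.countP (1/4 < ·) := by exact_mod_cast hk
    linarith

/-- Any bin (a multiset of item sizes in (0,1] summing to at most 1) of load at least 2/3
has weight at least 1. -/
theorem stmt3 (B : Multiset ℝ) (hB : ∀ x ∈ B, 0 < x ∧ x ≤ 1)
    (hcap : B.sum ≤ 1) (hvol : 2/3 ≤ B.sum) :
    1 ≤ (B.map W).sum :=
  stmt3_general B hB hvol
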